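/- arXiv:2102.09129 — 6 statements merged into one kernel-verified Lean document; each statement's English description precedes it below -/
import Mathlib

section
/- Let k, m be positive integers, p a prime, and a₁, …, a_m integers. If for each i ∈ {1,…,m} the congruence x² ≡ aᵢ (mod p^k) has no solution, then the congruence ∏_{i=1}^m (x² − aᵢ) ≡ 0 (mod p^{km}) has no solution. -/
open Finset

/-- If no factor were divisible by `p ^ k`, each would have multiplicity below `k`, and the
multiplicities of a prime add up over a product. -/
theorem Prime.exists_pow_dvd_of_pow_mul_card_dvd_prod {α ι : Type*} [CommMonoidWithZero α]
    [IsCancelMulZero α] {p : α} (hp : Prime p) {s : Finset ι} (hs : s.Nonempty) {f : ι → α}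
    {k : ℕ} (h : p ^ (k * #s) ∣ ∏ i ∈ s, f i) : ∃ i ∈ s, p ^ k ∣ f i := by
  by_contra! hnot
  have hfin : ∀ i ∈ s, FiniteMultiplicity p (f i) := fun i hi =>
    finiteMultiplicity_iff_emultiplicity_ne_top.mpr
      (emultiplicity_lt_iff_not_dvd.mpr (hnot i hi)).ne_top
  have hlt : ∑ i ∈ s, multiplicity p (f i) < k * #s :=
    calc ∑ i ∈ s, multiplicity p (f i) < ∑ _i ∈ s, k :=
          sum_lt_sum_of_nonempty hs fun i hi =>
            (hfin i hi).multiplicity_lt_iff_not_dvd.mpr (hnot i hi)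
      _ = k * #s := by rw [sum_const, smul_eq_mul, mul_comm]
  have hle : ((k * #s : ℕ) : ℕ∞) ≤ ∑ i ∈ s, (multiplicity p (f i) : ℕ∞) := by
    rw [← sum_congr rfl fun i hi => (hfin i hi).emultiplicity_eq_multiplicity,
      ← Finset.emultiplicity_prod hp]
    exact le_emultiplicity_of_pow_dvd h
  exact hlt.not_ge (mod_cast hle)

theorem stmt_3_general (k m : ℕ) (hm : 0 < m) (p : ℕ) (hp : p.Prime)
    (a : Fin m → ℤ)
    (h : ∀ i, ¬ ∃ x : ℤ, (p : ℤ) ^ k ∣ x ^ 2 - a i) :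
    ¬ ∃ x : ℤ, (p : ℤ) ^ (k * m) ∣ ∏ i, (x ^ 2 - a i) := by
  rintro ⟨x, hx⟩
  have hne : (univ : Finset (Fin m)).Nonempty := ⟨⟨0, hm⟩, mem_univ _⟩
  obtain ⟨i, -, hi⟩ := (Nat.prime_iff_prime_int.mp hp).exists_pow_dvd_of_pow_mul_card_dvd_prod
    hne (by rwa [card_univ, Fintype.card_fin])
  exact h i ⟨x, hi⟩

/-- If none of x² ≡ aᵢ (mod p^k) is solvable, then
∏ (x² − aᵢ) ≡ 0 (mod p^{km}) is not solvable. -/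
theorem stmt_3 (k m : ℕ) (hk : 0 < k) (hm : 0 < m) (p : ℕ) (hp : p.Prime)
    (a : Fin m → ℤ)
    (h : ∀ i, ¬ ∃ x : ℤ, (p : ℤ) ^ k ∣ x ^ 2 - a i) :
    ¬ ∃ x : ℤ, (p : ℤ) ^ (k * m) ∣ ∏ i, (x ^ 2 - a i) :=
  stmt_3_general k m hm p hp a h
end

section
/- Let k ≥ 3 and let a₁, …, a_k be distinct nonzero square-free integers such that for each m with 1 ≤ m ≤ k and every subset T ⊆ {1,…,m−1}, one has a_m > rad(∏_{j ∈ T} a_j). Then for every nonempty subset S ⊆ {1,…,k}, the product ∏_{j ∈ S} a_j is not a perfect square. -/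
/-! If `∏_{j ∈ S} a_j` were a square, let `m` be the largest index in `S` and `T = S \ {m}`.
The square-free `a_m` divides the square `a_m · ∏_{j ∈ T} a_j = c²`, hence divides `c`, so
`∏_{j ∈ T} a_j = a_m e²`: the square-free part of the sub-product over `T` is `a_m` itself,
contradicting `a_m > rad(∏_{j ∈ T} a_j)`. -/

/-- `IsRad m d` means `d` is the square-free part of `m`: `d` is square-free and
`m = d * k²` for some integer `k`. -/
def IsRad (m d : ℤ) : Prop := Squarefree d ∧ ∃ k : ℤ, m = d * k ^ 2

theorem Squarefree.exists_eq_mul_sq_of_mul_eq_sq {R : Type*} [CommMonoidWithZero R]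
    [IsCancelMulZero R] [DecompositionMonoid R] [Nontrivial R] {a b c : R}
    (ha : Squarefree a) (h : a * b = c ^ 2) :
    ∃ e, b = a * e ^ 2 := by
  obtain ⟨e, rfl⟩ : a ∣ c := ha.isRadical 2 c ⟨b, h.symm⟩
  refine ⟨e, mul_left_cancel₀ ha.ne_zero ?_⟩
  rw [h, mul_pow, sq a, mul_assoc]

theorem stmt_4_general (k : ℕ) (a : Fin k → ℤ)
    (hsf : ∀ i, Squarefree (a i))
    (hgt : ∀ m : Fin k, ∀ T : Finset (Fin k), (∀ j ∈ T, j < m) →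
      ∀ d : ℤ, IsRad (∏ j ∈ T, a j) d → d < a m) :
    ∀ S : Finset (Fin k), S.Nonempty → ¬ ∃ c : ℤ, ∏ j ∈ S, a j = c ^ 2 := by
  rintro S hS ⟨c, hc⟩
  set m := S.max' hS
  have hT : ∀ j ∈ S.erase m, j < m := fun j hj ↦ S.lt_max'_of_mem_erase_max' hS hj
  have hsplit : a m * ∏ j ∈ S.erase m, a j = c ^ 2 := by
    rw [Finset.mul_prod_erase _ _ (S.max'_mem hS), hc]
  obtain ⟨e, he⟩ := (hsf m).exists_eq_mul_sq_of_mul_eq_sq hsplit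
  exact lt_irrefl _ (hgt m _ hT (a m) ⟨hsf m, e, he⟩)

/-- If a₁,…,a_k (k ≥ 3) are distinct nonzero square-free integers such that each
a_m exceeds the square-free part of any sub-product of a₁,…,a_{m−1}, then no nonempty
sub-product of the a_j is a perfect square. -/
theorem stmt_4 (k : ℕ) (hk : 3 ≤ k) (a : Fin k → ℤ)
    (hinj : Function.Injective a)
    (hne0 : ∀ i, a i ≠ 0) (hsf : ∀ i, Squarefree (a i))
    (hgt : ∀ m : Fin k, ∀ T : Finset (Fin k), (∀ j ∈ T, j < m) →
      ∀ d : ℤ, IsRad (∏ j ∈ T, a j) d → d < a m) :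
    ∀ S : Finset (Fin k), S.Nonempty → ¬ ∃ c : ℤ, ∏ j ∈ S, a j = c ^ 2 :=
  stmt_4_general k a hsf hgt
end

section
/- For every positive integer m, the congruence (x² − 15)(x² − 17)(x² − 255)(x² − 2161) ≡ 0 (mod m) has an integer solution. -/
/-!
Since `255 = 15 · 17` and a product of two nonsquares modulo a prime is a square, at every odd
prime `p ∤ 255` one of `15`, `17`, `255` is a nonzero square; at `p ∈ {3, 5, 17}` so is `2161`.
Hensel's lemma lifts these square roots to every power of `p`, while `2161 ≡ 1 (mod 8)` makes
`2161` a square modulo every power of `2`. The Chinese remainder theorem glues the prime-power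
roots.
-/

open Polynomial

def HasRootMod (f : ℤ[X]) (m : ℤ) : Prop :=
  ∃ x : ℤ, m ∣ f.eval x

namespace HasRootMod

variable {f g : ℤ[X]} {m n : ℤ}

theorem of_dvd (h : HasRootMod g m) (hgf : g ∣ f) : HasRootMod f m := by
  obtain ⟨x, hx⟩ := h
  obtain ⟨q, rfl⟩ := hgf
  exact ⟨x, by rw [eval_mul]; exact hx.mul_right _⟩

theorem of_dvd_modulus (h : HasRootMod f m) (hnm : n ∣ m) : HasRootMod f n := by
  obtain ⟨x, hx⟩ := h
  exact ⟨x, hnm.trans hx⟩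

theorem mul_of_isCoprime (hm : HasRootMod f m) (hn : HasRootMod f n) (hmn : IsCoprime m n) :
    HasRootMod f (m * n) := by
  obtain ⟨x, hx⟩ := hm
  obtain ⟨y, hy⟩ := hn
  obtain ⟨u, v, huv⟩ := hmn
  have hzx : m ∣ x * v * n + y * u * m - x := ⟨u * (y - x), by linear_combination x * huv⟩
  have hzy : n ∣ x * v * n + y * u * m - y := ⟨v * (x - y), by linear_combination y * huv⟩
  exact ⟨_, IsCoprime.mul_dvd ⟨u, v, huv⟩
    ((dvd_sub_left hx).mp (hzx.trans (sub_dvd_eval_sub _ _ f)))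
    ((dvd_sub_left hy).mp (hzy.trans (sub_dvd_eval_sub _ _ f)))⟩

theorem of_forall_prime_pow (h : ∀ p k : ℕ, p.Prime → HasRootMod f ((p : ℤ) ^ k)) :
    ∀ m : ℕ, 0 < m → HasRootMod f m := by
  intro m
  induction m using Nat.recOnPrimeCoprime with
  | zero => exact fun h0 => absurd h0 (lt_irrefl 0)
  | prime_pow p k hp => exact fun _ => by exact_mod_cast h p k hp
  | coprime a b ha hb hab iha ihb =>
    intro _
    push_cast
    exact (iha (by omega)).mul_of_isCoprime (ihb (by omega)) (Nat.isCoprime_iff_coprime.mpr hab)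

end HasRootMod

theorem Polynomial.exists_pow_dvd_eval_of_isCoprime_derivative {R : Type*} [CommRing R]
    (f : R[X]) {q x : R} (hx : q ∣ f.eval x) (hd : IsCoprime q (f.derivative.eval x)) (n : ℕ) :
    ∃ y, q ^ (n + 1) ∣ f.eval y ∧ q ∣ y - x := by
  induction n with
  | zero => exact ⟨x, by simpa using hx, by simp⟩
  | succ n ih =>
    obtain ⟨y, ⟨c, hc⟩, e, he⟩ := ih
    have hdy : IsCoprime q (f.derivative.eval y) := by
      obtain ⟨d, hd'⟩ := (Dvd.intro e he.symm).trans (sub_dvd_eval_sub y x f.derivative)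
      simpa [sub_eq_iff_eq_add.mp hd'] using hd.add_mul_left_right d
    obtain ⟨u, v, huv⟩ := hdy
    -- Newton step `y ↦ y - f(y) · v`, with `v` an inverse of `f'(y)` modulo `q`.
    obtain ⟨k, hk⟩ := f.binomExpansion y (-(c * v * q ^ (n + 1)))
    refine ⟨y + -(c * v * q ^ (n + 1)), ⟨c * u + k * c ^ 2 * v ^ 2 * q ^ n, ?_⟩, ?_⟩
    · rw [hk, hc]; linear_combination -q ^ (n + 1) * c * huv
    · exact ⟨e - c * v * q ^ n, by linear_combination he⟩

theorem FiniteField.isSquare_or_isSquare_or_isSquare_mul {F : Type*} [Field F] [Fintype F]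
    [DecidableEq F] (a b : F) : IsSquare a ∨ IsSquare b ∨ IsSquare (a * b) := by
  by_contra! ⟨ha, hb, hab⟩
  rw [← quadraticChar_neg_one_iff_not_isSquare] at ha hb hab
  rw [map_mul, ha, hb] at hab
  norm_num at hab

theorem hasRootMod_sq_sub_C_prime_pow {p : ℕ} [Fact p.Prime] (hp : p ≠ 2) {a : ℤ}
    (ha0 : (a : ZMod p) ≠ 0) (ha : IsSquare (a : ZMod p)) (k : ℕ) :
    HasRootMod (X ^ 2 - C a) ((p : ℤ) ^ k) := by
  obtain ⟨r, hr⟩ := ha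
  obtain ⟨x, rfl⟩ := ZMod.intCast_surjective r
  have hroot : (p : ℤ) ∣ (X ^ 2 - C a).eval x := by
    rw [← ZMod.intCast_zmod_eq_zero_iff_dvd]
    simp [hr, sq]
  have hsimple : IsCoprime (p : ℤ) ((X ^ 2 - C a).derivative.eval x) := by
    rw [Prime.coprime_iff_not_dvd (Nat.prime_iff_prime_int.mp Fact.out),
      ← ZMod.intCast_zmod_eq_zero_iff_dvd]
    have hx : (x : ZMod p) ≠ 0 := fun hx => ha0 (by simpa [hx] using hr)
    have h2 : (2 : ZMod p) ≠ 0 := Ring.two_ne_zero (by rwa [ZMod.ringChar_zmod_n])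
    simpa [ZMod.natCast_self] using mul_ne_zero h2 hx
  obtain ⟨y, hy, -⟩ := (X ^ 2 - C a).exists_pow_dvd_eval_of_isCoprime_derivative hroot hsimple k
  exact HasRootMod.of_dvd_modulus ⟨y, hy⟩ (pow_dvd_pow _ k.le_succ)

theorem hasRootMod_sq_sub_C_two_pow {a : ℤ} (ha : a ≡ 1 [ZMOD 8]) (k : ℕ) :
    HasRootMod (X ^ 2 - C a) (2 ^ k) := by
  -- An odd root modulo `2 ^ (n + 3)`, shifted by `0` or `2 ^ (n + 2)`, is one modulo `2 ^ (n + 4)`.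
  have lift : ∀ n : ℕ, ∃ x : ℤ, Odd x ∧ (2 : ℤ) ^ (n + 3) ∣ x ^ 2 - a := by
    intro n
    induction n with
    | zero => exact ⟨1, odd_one, by simpa using (Int.ModEq.dvd ha)⟩
    | succ n ih =>
      obtain ⟨x, hx, c, hc⟩ := ih
      rcases Int.even_or_odd c with ⟨d, hd⟩ | hc'
      · exact ⟨x, hx, d, by rw [hc, hd]; ring⟩
      · obtain ⟨e, he⟩ := hx.add_odd hc'
        refine ⟨x + 2 ^ (n + 2), hx.add_even ⟨2 ^ (n + 1), by ring⟩, e + 2 ^ n, ?_⟩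
        linear_combination hc + 2 ^ (n + 3) * he
  obtain ⟨x, -, hx⟩ := lift k
  exact HasRootMod.of_dvd_modulus ⟨x, by simpa using hx⟩ (pow_dvd_pow 2 (k.le_add_right 3))

theorem exists_isSquare_intCast_zmod {p : ℕ} (hp : p.Prime) :
    ∃ a : ℤ, (a = 15 ∨ a = 17 ∨ a = 255 ∨ a = 2161) ∧
      (a : ZMod p) ≠ 0 ∧ IsSquare (a : ZMod p) := by
  by_cases h255 : ((255 : ℤ) : ZMod p) = 0
  · have hdvd : p ∣ 3 * (5 * 17) := by
      exact_mod_cast (ZMod.intCast_zmod_eq_zero_iff_dvd 255 p).mp h255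
    have hp' : p = 3 ∨ p = 5 ∨ p = 17 := by
      have hq (q : ℕ) (hq : q.Prime) : p ∣ q → p = q := (Nat.prime_dvd_prime_iff_eq hp hq).mp
      rw [hp.dvd_mul, hp.dvd_mul] at hdvd
      exact hdvd.imp (hq 3 (by norm_num)) (Or.imp (hq 5 (by norm_num)) (hq 17 (by norm_num)))
    refine ⟨2161, by norm_num, ?_⟩
    rcases hp' with rfl | rfl | rfl
    · exact ⟨by decide, 1, by decide⟩
    · exact ⟨by decide, 1, by decide⟩
    · exact ⟨by decide, 6, by decide⟩
  · have := Fact.mk hp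
    have h255_eq : ((15 : ℤ) : ZMod p) * ((17 : ℤ) : ZMod p) = ((255 : ℤ) : ZMod p) := by
      push_cast; norm_num
    rw [← h255_eq] at h255
    rcases FiniteField.isSquare_or_isSquare_or_isSquare_mul
        ((15 : ℤ) : ZMod p) ((17 : ℤ) : ZMod p)
      with h | h | h
    · exact ⟨15, by norm_num, left_ne_zero_of_mul h255, h⟩
    · exact ⟨17, by norm_num, right_ne_zero_of_mul h255, h⟩
    · exact ⟨255, by norm_num, h255_eq ▸ h255, h255_eq ▸ h⟩

noncomputable def f₄ : ℤ[X] :=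
  (X ^ 2 - C 15) * (X ^ 2 - C 17) * (X ^ 2 - C 255) * (X ^ 2 - C 2161)

theorem sq_sub_C_dvd_f₄ {a : ℤ} (ha : a = 15 ∨ a = 17 ∨ a = 255 ∨ a = 2161) :
    X ^ 2 - C a ∣ f₄ := by
  rcases ha with rfl | rfl | rfl | rfl
  · exact dvd_mul_of_dvd_left (dvd_mul_of_dvd_left (dvd_mul_right _ _) _) _
  · exact dvd_mul_of_dvd_left (dvd_mul_of_dvd_left (dvd_mul_left _ _) _) _
  · exact dvd_mul_of_dvd_left (dvd_mul_left _ _) _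
  · exact dvd_mul_left _ _

/-- (x² − 15)(x² − 17)(x² − 255)(x² − 2161) has a root modulo every
positive integer. -/
theorem stmt_8 :
    ∀ m : ℕ, 0 < m →
      ∃ x : ℤ, (m : ℤ) ∣ (x ^ 2 - 15) * (x ^ 2 - 17) * (x ^ 2 - 255) * (x ^ 2 - 2161) := by
  intro m hm
  have hprime_pow (p k : ℕ) (hp : p.Prime) : HasRootMod f₄ ((p : ℤ) ^ k) := by
    obtain rfl | hp2 := eq_or_ne p 2
    · exact (hasRootMod_sq_sub_C_two_pow (a := 2161) (by decide) k).of_dvd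
        (sq_sub_C_dvd_f₄ (by norm_num))
    · have := Fact.mk hp
      obtain ⟨a, ha, ha0, hsq⟩ := exists_isSquare_intCast_zmod hp
      exact (hasRootMod_sq_sub_C_prime_pow hp2 ha0 hsq k).of_dvd (sq_sub_C_dvd_f₄ ha)
  obtain ⟨x, hx⟩ := HasRootMod.of_forall_prime_pow hprime_pow m hm
  exact ⟨x, by simpa [f₄] using hx⟩
end

section
/- For every positive integer m, the congruence (x² − 15)(x² − 17)(x² − 557)(x² − 255)(x² − 871711) ≡ 0 (mod m) has an integer solution. -/
/-!
For every prime `p` one of `15, 17, 255, 871711` is a square in `ℤ_[p]`. Hensel's lemma reduces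
this to a square root mod `8` for `p = 2`, and to a square root of a unit mod `p` for odd `p`:
at `p = 2` use `17 ≡ 1 (mod 8)`; at `p = 3, 5` use `871711 ≡ 1`; at `p = 17` use `15 ≡ 7²`; at any
other odd `p`, `15`, `17` and `255 = 15 · 17` are units mod `p`, and by multiplicativity of the
quadratic character one of them is a square. Reducing modulo `p ^ k` gives a root of the
polynomial modulo every prime power, and the Chinese remainder theorem glues these together.
-/

open Polynomial

theorem FiniteField.isSquare_mul_of_not_isSquare {F : Type*} [Field F] [Fintype F] {a b : F}
    (ha : ¬IsSquare a) (hb : ¬IsSquare b) : IsSquare (a * b) := by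
  classical
  have hab : a * b ≠ 0 :=
    mul_ne_zero (by rintro rfl; exact ha .zero) (by rintro rfl; exact hb .zero)
  rw [← quadraticChar_one_iff_isSquare hab, map_mul,
    quadraticChar_neg_one_iff_not_isSquare.mpr ha, quadraticChar_neg_one_iff_not_isSquare.mpr hb,
    neg_mul_neg, one_mul]

section RootsModN

variable {f : ℤ[X]}

theorem exists_aeval_zmod_mul_eq_zero {a b : ℕ} (hab : a.Coprime b) {x : ZMod a} {y : ZMod b}
    (hx : aeval x f = 0) (hy : aeval y f = 0) : ∃ z : ZMod (a * b), aeval z f = 0 :=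
  ⟨(ZMod.chineseRemainder hab).symm (x, y), by
    rw [← RingEquiv.coe_toIntAlgEquiv, aeval_algHom_apply, aeval_prod_apply, hx, hy,
      Prod.mk_zero_zero, map_zero]⟩

theorem exists_aeval_zmod_eq_zero_of_prime_pow
    (h : ∀ p k : ℕ, p.Prime → ∃ x : ZMod (p ^ k), aeval x f = 0) {m : ℕ} (hm : m ≠ 0) :
    ∃ x : ZMod m, aeval x f = 0 := by
  induction m using Nat.recOnPosPrimePosCoprime with
  | prime_pow p k hp _ => exact h p k hp
  | zero => exact absurd rfl hm
  | one => exact ⟨0, Subsingleton.elim _ _⟩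
  | coprime a b _ _ hab iha ihb =>
    obtain ⟨x, hx⟩ := iha (by omega)
    obtain ⟨y, hy⟩ := ihb (by omega)
    exact exists_aeval_zmod_mul_eq_zero hab hx hy

theorem exists_intCast_dvd_eval_of_aeval_zmod_eq_zero {m : ℕ} {y : ZMod m} (hy : aeval y f = 0) :
    ∃ x : ℤ, (m : ℤ) ∣ f.eval x := by
  obtain ⟨x, rfl⟩ := ZMod.intCast_surjective y
  refine ⟨x, (ZMod.intCast_zmod_eq_zero_iff_dvd _ _).mp ?_⟩
  rwa [aeval_def, eval₂_at_intCast, eq_intCast] at hy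

end RootsModN

namespace PadicInt

variable {p : ℕ} [Fact p.Prime]

theorem isSquare_of_norm_sq_sub_lt {a x : ℤ_[p]} (h : ‖x ^ 2 - a‖ < ‖2 * x‖ ^ 2) :
    IsSquare a := by
  obtain ⟨z, hz, -⟩ := hensels_lemma (F := X ^ 2 - C a) (a := x) (by
    rwa [derivative_sub, derivative_X_sq, derivative_C, sub_zero, map_mul, aeval_C, aeval_X,
      map_sub, map_pow, aeval_X, aeval_C, Algebra.algebraMap_self, RingHom.id_apply])
  exact ⟨z, by simpa [sq, sub_eq_zero, eq_comm] using hz⟩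

theorem isSquare_of_isSquare_toZMod (hp : p ≠ 2) {a : ℤ_[p]} (ha : toZMod a ≠ 0)
    (h : IsSquare (toZMod a)) : IsSquare a := by
  obtain ⟨r, hr⟩ := h
  obtain ⟨x, rfl⟩ := ZMod.ringHom_surjective toZMod r
  have norm_lt_one_iff {y : ℤ_[p]} : ‖y‖ < 1 ↔ toZMod y = 0 := by
    rw [← mem_nonunits, ← IsLocalRing.mem_maximalIdeal, ← ker_toZMod, RingHom.mem_ker]
  refine isSquare_of_norm_sq_sub_lt (x := x) ?_
  have h_two : ‖2 * x‖ = 1 := by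
    refine (norm_le_one _).antisymm (not_lt.mp fun h2 => ?_)
    rw [norm_lt_one_iff, map_mul, map_ofNat, mul_eq_zero] at h2
    exact h2.elim (Ring.two_ne_zero (by rwa [ZMod.ringChar_zmod_n]))
      fun hx => ha (by rw [hr, hx, mul_zero])
  rw [h_two, one_pow, norm_lt_one_iff, map_sub, map_pow, hr, sq, sub_self]

theorem isSquare_intCast_of_modEq_one {a : ℤ} (ha : a ≡ 1 [ZMOD 8]) : IsSquare (a : ℤ_[2]) := by
  refine isSquare_of_norm_sq_sub_lt (x := 1) ?_
  have h8 : ‖((1 - a : ℤ) : ℤ_[2])‖ ≤ (2 : ℝ) ^ (-3 : ℤ) := norm_int_le_pow_iff_dvd.mpr ha.dvd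
  have h2 : ‖(2 : ℤ_[2])‖ = 2⁻¹ := by simpa using norm_p (p := 2)
  push_cast at h8
  rw [mul_one, h2, one_pow]
  norm_num at h8 ⊢
  linarith

end PadicInt

theorem exists_isSquare_padicInt (p : ℕ) [Fact p.Prime] :
    ∃ a ∈ ({15, 17, 557, 255, 871711} : Finset ℤ), IsSquare (a : ℤ_[p]) := by
  have hp := Fact.out (p := p.Prime)
  by_cases h2 : p = 2
  · subst h2
    exact ⟨17, by simp, PadicInt.isSquare_intCast_of_modEq_one (by decide)⟩
  have lift {a : ℤ} (ha : ¬(p : ℤ) ∣ a) (h : IsSquare (a : ZMod p)) : IsSquare (a : ℤ_[p]) := by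
    rw [← ZMod.intCast_zmod_eq_zero_iff_dvd] at ha
    exact PadicInt.isSquare_of_isSquare_toZMod h2 (by rwa [map_intCast]) (by rwa [map_intCast])
  by_cases h3 : p = 3
  · subst h3; exact ⟨871711, by simp, lift (by norm_num) ⟨1, rfl⟩⟩
  by_cases h5 : p = 5
  · subst h5; exact ⟨871711, by simp, lift (by norm_num) ⟨1, rfl⟩⟩
  by_cases h17 : p = 17
  · subst h17; exact ⟨15, by simp, lift (by norm_num) ⟨7, rfl⟩⟩
  have hndvd : ¬(p : ℤ) ∣ 15 * 17 := by
    have : ¬p ∣ 3 * 5 * 17 := by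
      rw [hp.dvd_mul, hp.dvd_mul, Nat.prime_dvd_prime_iff_eq hp Nat.prime_three,
        Nat.prime_dvd_prime_iff_eq hp Nat.prime_five, Nat.prime_dvd_prime_iff_eq hp (by norm_num)]
      tauto
    exact_mod_cast this
  by_cases hs15 : IsSquare ((15 : ℤ) : ZMod p)
  · exact ⟨15, by simp, lift (fun h => hndvd (h.mul_right _)) hs15⟩
  by_cases hs17 : IsSquare ((17 : ℤ) : ZMod p)
  · exact ⟨17, by simp, lift (fun h => hndvd (h.mul_left _)) hs17⟩
  refine ⟨255, by simp, lift hndvd ?_⟩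
  rw [show (255 : ℤ) = 15 * 17 by norm_num, Int.cast_mul]
  exact FiniteField.isSquare_mul_of_not_isSquare hs15 hs17

theorem exists_aeval_prod_sq_sub_eq_zero {S : Finset ℤ}
    (hS : ∀ (p : ℕ) [Fact p.Prime], ∃ a ∈ S, IsSquare (a : ℤ_[p])) {m : ℕ} (hm : m ≠ 0) :
    ∃ x : ZMod m, aeval x (∏ a ∈ S, (X ^ 2 - C a)) = 0 := by
  refine exists_aeval_zmod_eq_zero_of_prime_pow (fun p k hp => ?_) hm
  have := Fact.mk hp
  obtain ⟨a, haS, z, hz⟩ := hS p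
  refine ⟨PadicInt.toZModPow k z, ?_⟩
  rw [map_prod]
  refine Finset.prod_eq_zero haS ?_
  rw [map_sub, map_pow, aeval_X, aeval_C, sq, ← map_mul, ← hz, map_intCast, algebraMap_int_eq,
    eq_intCast, sub_self]

/-- (x² − 15)(x² − 17)(x² − 557)(x² − 255)(x² − 871711) has a root modulo
every positive integer. -/
theorem stmt_14 :
    ∀ m : ℕ, 0 < m →
      ∃ x : ℤ, (m : ℤ) ∣
        (x ^ 2 - 15) * (x ^ 2 - 17) * (x ^ 2 - 557) * (x ^ 2 - 255) * (x ^ 2 - 871711) := by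
  intro m hm
  obtain ⟨y, hy⟩ := exists_aeval_prod_sq_sub_eq_zero exists_isSquare_padicInt hm.ne'
  obtain ⟨x, hx⟩ := exists_intCast_dvd_eval_of_aeval_zmod_eq_zero hy
  refine ⟨x, ?_⟩
  simpa [mul_assoc] using hx
end

section
/- Let a₁, …, a_n (n ≥ 3) be distinct nonzero square-free integers none equal to 1, and suppose there is a subset T ⊆ {1,…,n} of odd cardinality such that ∏_{j∈T} a_j is a perfect square, for every j ∈ T and every odd prime p | a_j there exists i ≠ j with (a_i/p) = +1, and some a_i ≡ 1 (mod 8) with a_i ≠ 1. Then the polynomial ∏_{i=1}^n (x² − a_i) has a root modulo every positive integer. -/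
/-!
Since the roots of an integer polynomial modulo coprime moduli glue by the Chinese remainder
theorem, it suffices to find a root modulo every prime power `p ^ k`. For `p = 2` the factor
`x² - aᵢ` with `aᵢ ≡ 1 (mod 8)` has a root modulo every power of `2`. For odd `p` it suffices, by
Hensel's lemma, to find an `aᵢ` which is a nonzero square modulo `p`. If `p` divides some `aⱼ`
with `j ∈ T`, the hypothesis on `T` provides one; otherwise all `aⱼ` with `j ∈ T` are units
mod `p` whose product is a square, and since `T` has odd cardinality the quadratic characters of
the `aⱼ` cannot all be `-1`.
-/

open Polynomial

theorem Polynomial.dvd_eval_of_dvd_sub (f : ℤ[X]) {m x y : ℤ} (hxy : m ∣ y - x)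
    (hx : m ∣ f.eval x) : m ∣ f.eval y := by
  simpa using dvd_add (hxy.trans (sub_dvd_eval_sub y x f)) hx

theorem Polynomial.exists_eval_dvd_mul_of_isCoprime (f : ℤ[X]) {m₁ m₂ : ℤ}
    (hco : IsCoprime m₁ m₂) (h₁ : ∃ x, m₁ ∣ f.eval x) (h₂ : ∃ x, m₂ ∣ f.eval x) :
    ∃ x, m₁ * m₂ ∣ f.eval x := by
  obtain ⟨x₁, hx₁⟩ := h₁
  obtain ⟨x₂, hx₂⟩ := h₂
  obtain ⟨u, v, huv⟩ := hco
  set z := x₂ * u * m₁ + x₁ * v * m₂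
  have hz₁ : m₁ ∣ z - x₁ := ⟨u * (x₂ - x₁), by linear_combination x₁ * huv⟩
  have hz₂ : m₂ ∣ z - x₂ := ⟨v * (x₁ - x₂), by linear_combination x₂ * huv⟩
  exact ⟨z, IsCoprime.mul_dvd ⟨u, v, huv⟩ (f.dvd_eval_of_dvd_sub hz₁ hx₁)
    (f.dvd_eval_of_dvd_sub hz₂ hx₂)⟩

theorem Polynomial.exists_eval_dvd_of_forall_prime_pow (f : ℤ[X])
    (h : ∀ p k : ℕ, p.Prime → 0 < k → ∃ x, (p : ℤ) ^ k ∣ f.eval x) :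
    ∀ m : ℕ, 0 < m → ∃ x, (m : ℤ) ∣ f.eval x := by
  intro m
  induction m using Nat.recOnPosPrimePosCoprime with
  | prime_pow p k hp hk => exact fun _ => by exact_mod_cast h p k hp hk
  | zero => exact fun hm => absurd hm (lt_irrefl 0)
  | one => exact fun _ => ⟨0, by simp⟩
  | coprime m₁ m₂ h₁ h₂ hco ih₁ ih₂ =>
    intro _
    push_cast
    exact f.exists_eval_dvd_mul_of_isCoprime (Nat.isCoprime_iff_coprime.mpr hco)
      (ih₁ (by omega)) (ih₂ (by omega))

theorem exists_sq_sub_dvd_two_pow {a : ℤ} (ha : a % 8 = 1) (k : ℕ) :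
    ∃ x : ℤ, 2 ^ k ∣ x ^ 2 - a := by
  suffices ∀ j : ℕ, ∃ x : ℤ, x % 2 = 1 ∧ 2 ^ (j + 3) ∣ x ^ 2 - a by
    obtain ⟨x, -, hx⟩ := this k
    exact ⟨x, (pow_dvd_pow 2 (by omega)).trans hx⟩
  intro j
  induction j with
  | zero => exact ⟨1, rfl, by norm_num; omega⟩
  | succ j ih =>
    obtain ⟨x, hx, t, ht⟩ := ih
    by_cases ht2 : 2 ∣ t
    · obtain ⟨w, rfl⟩ := ht2
      exact ⟨x, hx, w, by rw [ht]; ring⟩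
    · -- `(x + 2 ^ (j + 2)) ^ 2 - a = 2 ^ (j + 3) * (t + x) + 2 ^ (2 * j + 4)` and `t + x` is even
      obtain ⟨w, hw⟩ : 2 ∣ t + x := by omega
      have h2 : (2 : ℤ) ∣ 2 ^ (j + 2) := dvd_pow_self 2 (by omega)
      exact ⟨x + 2 ^ (j + 2), by omega, w + 2 ^ j, by linear_combination ht + 2 ^ (j + 3) * hw⟩

theorem exists_sq_sub_dvd_prime_pow {p : ℕ} (hp : p.Prime) (hp2 : p ≠ 2) {a : ℤ}
    (ha : ¬ (p : ℤ) ∣ a) (hx : ∃ x : ℤ, (p : ℤ) ∣ x ^ 2 - a) (k : ℕ) :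
    ∃ x : ℤ, (p : ℤ) ^ k ∣ x ^ 2 - a := by
  have hpZ : Prime (p : ℤ) := Nat.prime_iff_prime_int.mp hp
  suffices ∀ j : ℕ, ∃ x : ℤ, (p : ℤ) ^ (j + 1) ∣ x ^ 2 - a by
    obtain ⟨x, hx⟩ := this k
    exact ⟨x, (pow_dvd_pow _ k.le_succ).trans hx⟩
  intro j
  induction j with
  | zero => simpa using hx
  | succ j ih =>
    obtain ⟨x, t, ht⟩ := ih
    have h2x : ¬ (p : ℤ) ∣ 2 * x := by
      intro h
      rcases hpZ.dvd_or_dvd h with h | h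
      · exact hp2 ((Nat.prime_dvd_prime_iff_eq hp Nat.prime_two).mp (by exact_mod_cast h))
      · have hpt : (p : ℤ) ∣ x ^ 2 - a := ht ▸ (dvd_pow_self _ j.succ_ne_zero).mul_right t
        exact ha ((dvd_sub_right (dvd_pow h two_ne_zero)).mp hpt)
    obtain ⟨u, v, huv⟩ := ((hpZ.coprime_iff_not_dvd).mpr h2x).symm
    -- `u` inverts `2x` mod `p`, so the correction `x ↦ x - p ^ (j + 1) * t * u` kills `t` mod `p`
    exact ⟨x - p ^ (j + 1) * t * u, t * v + p ^ j * t ^ 2 * u ^ 2, by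
      linear_combination ht - (p : ℤ) ^ (j + 1) * t * huv⟩

theorem exists_isSquare_of_isSquare_prod {F ι : Type*} [Field F] [Fintype F] [DecidableEq F]
    {T : Finset ι} {f : ι → F} (hodd : Odd T.card) (hf : ∀ j ∈ T, f j ≠ 0)
    (hsq : IsSquare (∏ j ∈ T, f j)) : ∃ j ∈ T, IsSquare (f j) := by
  have hchi : ∏ j ∈ T, quadraticChar F (f j) = 1 := by
    obtain ⟨c, hc⟩ := hsq
    have hc0 : c ≠ 0 := by
      rintro rfl
      exact Finset.prod_ne_zero_iff.mpr hf (by simpa using hc)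
    rw [← map_prod, hc, ← sq, map_pow, quadraticChar_sq_one hc0]
  by_contra! h
  have hneg : ∀ j ∈ T, quadraticChar F (f j) = -1 := fun j hj =>
    (quadraticChar_dichotomy (hf j hj)).resolve_left
      fun h1 => h j hj ((quadraticChar_one_iff_isSquare (hf j hj)).mp h1)
  rw [Finset.prod_congr rfl hneg, Finset.prod_const, hodd.neg_one_pow] at hchi
  norm_num at hchi

theorem ZMod.exists_sq_sub_dvd_of_isSquare {n : ℕ} {a : ℤ} (h : IsSquare (a : ZMod n)) :
    ∃ x : ℤ, (n : ℤ) ∣ x ^ 2 - a := by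
  obtain ⟨r, hr⟩ := h
  refine ⟨r.cast, (ZMod.intCast_zmod_eq_zero_iff_dvd _ _).mp ?_⟩
  push_cast
  rw [hr, sq, sub_self]

theorem exists_nonzero_square_mod_prime {ι : Type*} {a : ι → ℤ} {T : Finset ι}
    (hodd : Odd T.card) (hsq : ∃ c : ℤ, ∏ j ∈ T, a j = c ^ 2)
    (hres : ∀ j ∈ T, ∀ p : ℕ, p.Prime → Odd p → (p : ℤ) ∣ a j →
      ∃ i, i ≠ j ∧ ¬ (p : ℤ) ∣ a i ∧ ∃ x : ℤ, (p : ℤ) ∣ x ^ 2 - a i)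
    {p : ℕ} (hp : p.Prime) (hp2 : p ≠ 2) :
    ∃ i, ¬ (p : ℤ) ∣ a i ∧ ∃ x : ℤ, (p : ℤ) ∣ x ^ 2 - a i := by
  by_cases hT : ∃ j ∈ T, (p : ℤ) ∣ a j
  · obtain ⟨j, hj, hpj⟩ := hT
    obtain ⟨i, -, hi⟩ := hres j hj p hp (hp.odd_of_ne_two hp2) hpj
    exact ⟨i, hi⟩
  push Not at hT
  have : Fact p.Prime := ⟨hp⟩
  have hunit : ∀ j ∈ T, (a j : ZMod p) ≠ 0 := fun j hj h =>
    hT j hj ((ZMod.intCast_zmod_eq_zero_iff_dvd _ _).mp h)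
  have hprod : IsSquare (∏ j ∈ T, (a j : ZMod p)) := by
    obtain ⟨c, hc⟩ := hsq
    exact ⟨c, by rw [← Int.cast_prod, hc]; push_cast; ring⟩
  obtain ⟨j, hj, hsqj⟩ := exists_isSquare_of_isSquare_prod hodd hunit hprod
  exact ⟨j, hT j hj, ZMod.exists_sq_sub_dvd_of_isSquare hsqj⟩

theorem stmt_15_general (n : ℕ) (a : Fin n → ℤ)
    (T : Finset (Fin n)) (hodd : Odd T.card)
    (hsq : ∃ c : ℤ, ∏ j ∈ T, a j = c ^ 2)
    (hres : ∀ j ∈ T, ∀ p : ℕ, p.Prime → Odd p → (p : ℤ) ∣ a j →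
      ∃ i, i ≠ j ∧ ¬ (p : ℤ) ∣ a i ∧ ∃ x : ℤ, (p : ℤ) ∣ x ^ 2 - a i)
    (h8 : ∃ i, a i % 8 = 1 ∧ a i ≠ 1) :
    ∀ m : ℕ, 0 < m → ∃ x : ℤ, (m : ℤ) ∣ ∏ i, (x ^ 2 - a i) := by
  have heval : ∀ x, (∏ i, (X ^ 2 - C (a i))).eval x = ∏ i, (x ^ 2 - a i) := by
    simp [eval_prod]
  simp only [← heval]
  refine exists_eval_dvd_of_forall_prime_pow _ fun p k hp _ => ?_
  have factor_dvd : ∀ i x, x ^ 2 - a i ∣ (∏ i, (X ^ 2 - C (a i))).eval x := fun i x =>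
    heval x ▸ Finset.dvd_prod_of_mem _ (Finset.mem_univ i)
  obtain ⟨i, x, hx⟩ : ∃ i, ∃ x : ℤ, (p : ℤ) ^ k ∣ x ^ 2 - a i := by
    by_cases hp2 : p = 2
    · obtain ⟨i, hi, -⟩ := h8
      subst hp2
      exact ⟨i, by exact_mod_cast exists_sq_sub_dvd_two_pow hi k⟩
    · obtain ⟨i, hpi, hroot⟩ := exists_nonzero_square_mod_prime hodd hsq hres hp hp2
      exact ⟨i, exists_sq_sub_dvd_prime_pow hp hp2 hpi hroot k⟩
  exact ⟨x, hx.trans (factor_dvd i x)⟩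

/-- Sufficiency part of the intersectivity criterion for
∏ (x² − aᵢ), with a₁,…,aₙ distinct nonzero square-free integers, none equal to 1.
Here "(aᵢ/p) = +1" is phrased as: aᵢ is a nonzero square modulo the odd prime p. -/
theorem stmt_15 (n : ℕ) (hn : 3 ≤ n) (a : Fin n → ℤ)
    (hinj : Function.Injective a)
    (hne0 : ∀ i, a i ≠ 0) (hsf : ∀ i, Squarefree (a i)) (hne1 : ∀ i, a i ≠ 1)
    (T : Finset (Fin n)) (hodd : Odd T.card)
    (hsq : ∃ c : ℤ, ∏ j ∈ T, a j = c ^ 2)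
    (hres : ∀ j ∈ T, ∀ p : ℕ, p.Prime → Odd p → (p : ℤ) ∣ a j →
      ∃ i, i ≠ j ∧ ¬ (p : ℤ) ∣ a i ∧ ∃ x : ℤ, (p : ℤ) ∣ x ^ 2 - a i)
    (h8 : ∃ i, a i % 8 = 1 ∧ a i ≠ 1) :
    ∀ m : ℕ, 0 < m → ∃ x : ℤ, (m : ℤ) ∣ ∏ i, (x ^ 2 - a i) :=
  stmt_15_general n a T hodd hsq hres h8
end

section
/- Let a and b be positive integers such that gcd(a,b) is square-free. Then the set of square-free natural numbers congruent to b modulo a has positive asymptotic density; in particular, it is infinite. -/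
/-!
Möbius inversion gives `1_{squarefree}(k) = ∑_{d² ∣ k} μ d` for `k ≠ 0`, so the count of squarefree
`k ≤ N` with `k ≡ b [MOD a]` is `∑_d μ d · #{k ≤ N | d² ∣ k, k ≡ b [MOD a]}`. Each condition
`d² ∣ k ∧ k ≡ b [MOD a]` is periodic of period `a d²`, hence has a density, and the `d`-th term is
at most `N / d²`; dominated convergence for series gives the density of the whole set.

For positivity, Dirichlet's theorem gives a prime `P > a` with `P ≡ b / g [MOD a / g]`, where
`g = gcd a b`, so `r = P g` is squarefree and `r ≡ b [MOD a]`. In the class of `r` modulo `a²` no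
element is divisible by `p²` with `p ∣ a`, and a prime `p ∤ a` removes a proportion `1 / p²` of the
class, up to an error `1`; only the primes `p ≤ √N` occur below `N`. Since
`∑_p 1 / p² ≤ π² / 6 - 1 < 1`, a proportion at least `(2 - π² / 6) / a²` of all integers survives.
-/

open Filter Finset ArithmeticFunction Function Real
open scoped ArithmeticFunction.Moebius Topology

namespace Nat

theorem sq_dvd_sq_mul_iff_dvd {d s m : ℕ} (hm : Squarefree m) : d ^ 2 ∣ s ^ 2 * m ↔ d ∣ s := by
  refine ⟨fun h => ?_, fun h => (pow_dvd_pow_of_dvd h 2).mul_right m⟩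
  rcases eq_zero_or_pos (d.gcd s) with hg | hg
  · rw [Nat.gcd_eq_zero_iff] at hg
    simp [hg.2]
  obtain ⟨g, d', s', hg0, hcop, rfl, rfl⟩ := Nat.exists_coprime' hg
  have h' : d' ^ 2 ∣ s' ^ 2 * m := by
    rw [mul_pow, mul_pow, mul_right_comm] at h
    exact Nat.dvd_of_mul_dvd_mul_right (by positivity) h
  have hd' : d' = 1 :=
    Nat.isUnit_iff.mp (hm d' (sq d' ▸ ((hcop.pow 2 2).dvd_of_dvd_mul_left h')))
  simp [hd']

theorem sum_moebius_divisors_filter_sq_dvd {n : ℕ} (hn : n ≠ 0) :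
    ∑ d ∈ n.divisors with d ^ 2 ∣ n, μ d = if Squarefree n then 1 else 0 := by
  obtain ⟨m, s, rfl, hm⟩ := Nat.sq_mul_squarefree n
  have hs : s ≠ 0 := by rintro rfl; simp at hn
  have hfilter : {d ∈ (s ^ 2 * m).divisors | d ^ 2 ∣ s ^ 2 * m} = s.divisors := by
    ext d
    simp only [mem_filter, mem_divisors, sq_dvd_sq_mul_iff_dvd hm]
    exact ⟨fun h => ⟨h.2, hs⟩,
      fun h => ⟨⟨(h.1.trans (Dvd.intro_left _ (sq s).symm)).mul_right m, hn⟩, h.1⟩⟩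
  have hsq : Squarefree (s ^ 2 * m) ↔ s = 1 := by
    simp only [Squarefree, ← sq, sq_dvd_sq_mul_iff_dvd hm, Nat.isUnit_iff]
    exact ⟨fun h => h s dvd_rfl, fun h d hd => Nat.dvd_one.mp (h ▸ hd)⟩
  rw [hfilter, ← coe_mul_zeta_apply, moebius_mul_coe_zeta, one_apply]
  exact if_congr hsq.symm rfl rfl

end Nat

theorem card_filter_squarefree_eq_sum_moebius (P : ℕ → Prop) [DecidablePred P] (N : ℕ) :
    (#{k ∈ Ioc 0 N | Squarefree k ∧ P k} : ℤ) =
      ∑ d ∈ Ioc 0 N, μ d * #{k ∈ Ioc 0 N | d ^ 2 ∣ k ∧ P k} := by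
  simp_rw [card_filter, Nat.cast_sum, mul_sum]
  rw [sum_comm]
  refine sum_congr rfl fun k hk => ?_
  rw [mem_Ioc] at hk
  by_cases hP : P k
  · have hdivisors : {d ∈ Ioc 0 N | d ^ 2 ∣ k} = {d ∈ k.divisors | d ^ 2 ∣ k} := by
      ext d
      simp only [mem_filter, mem_Ioc, Nat.mem_divisors]
      constructor
      · rintro ⟨-, hd⟩
        exact ⟨⟨(Dvd.intro _ (sq d).symm).trans hd, hk.1.ne'⟩, hd⟩
      · rintro ⟨⟨hdk, -⟩, hd⟩
        have hd0 : d ≠ 0 := by rintro rfl; simp at hd; omega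
        exact ⟨⟨Nat.pos_of_ne_zero hd0, (Nat.le_of_dvd hk.1 hdk).trans hk.2⟩, hd⟩
    simp only [hP, and_true, Nat.cast_ite, Nat.cast_one, Nat.cast_zero, mul_ite, mul_one,
      mul_zero, ← sum_filter, hdivisors, Nat.sum_moebius_divisors_filter_sq_dvd hk.1.ne']
  · simp [hP]

theorem Function.Periodic.count_eq_div_mul_count_add_count_mod {p : ℕ → Prop} [DecidablePred p]
    {L : ℕ} (hp : Periodic p L) (N : ℕ) :
    Nat.count p N = N / L * Nat.count p L + Nat.count p (N % L) := by
  have hshift (q : ℕ) : (fun k => p (L * q + k)) = p := funext fun k => by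
    simpa [add_comm, mul_comm] using hp.nat_mul q k
  have hblock (q : ℕ) : Nat.count p (L * q) = q * Nat.count p L := by
    induction q with
    | zero => simp
    | succ q ih => simp only [mul_add_one, Nat.count_add, ih, hshift]; ring
  conv_lhs => rw [← Nat.div_add_mod N L]
  simp only [Nat.count_add, hblock, hshift]

theorem tendsto_div_of_abs_sub_mul_le {u : ℕ → ℝ} {α C : ℝ} (h : ∀ N, |u N - α * N| ≤ C) :
    Tendsto (fun N => u N / N) atTop (𝓝 α) := by
  have herr : Tendsto (fun N : ℕ => (u N - α * N) / N) atTop (𝓝 0) := by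
    refine squeeze_zero_norm (fun N => ?_) (tendsto_const_div_atTop_nhds_zero_nat C)
    rw [Real.norm_eq_abs, abs_div, Nat.abs_cast]
    exact div_le_div_of_nonneg_right (h N) N.cast_nonneg
  rw [← zero_add α]
  refine (herr.add_const α).congr' ?_
  filter_upwards [eventually_ne_atTop 0] with N hN
  field_simp
  ring

theorem Function.Periodic.tendsto_count_div {p : ℕ → Prop} [DecidablePred p] {L : ℕ}
    (hp : Periodic p L) (hL : 0 < L) :
    Tendsto (fun N => (Nat.count p N : ℝ) / N) atTop (𝓝 (Nat.count p L / L)) := by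
  refine tendsto_div_of_abs_sub_mul_le (C := L) fun N => ?_
  have hrem : (Nat.count p (N % L) : ℝ) ≤ L := by
    exact_mod_cast (Nat.count_le _).trans (Nat.mod_lt N hL).le
  have hrem' : (N % L : ℕ) * (Nat.count p L : ℝ) / L ≤ L := by
    rw [div_le_iff₀ (by exact_mod_cast hL)]
    exact_mod_cast Nat.mul_le_mul (Nat.mod_lt N hL).le (Nat.count_le ..)
  have h0 : (0 : ℝ) ≤ (N % L : ℕ) * (Nat.count p L : ℝ) / L := by positivity
  have hN : (N : ℝ) = L * (N / L : ℕ) + (N % L : ℕ) := by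
    exact_mod_cast (Nat.div_add_mod N L).symm
  have hL' : (L : ℝ) ≠ 0 := by exact_mod_cast hL.ne'
  have key : ((N / L : ℕ) * Nat.count p L + Nat.count p (N % L) : ℝ) - Nat.count p L / L * N =
      Nat.count p (N % L) - (N % L : ℕ) * Nat.count p L / L := by
    rw [hN]; field_simp; ring
  rw [hp.count_eq_div_mul_count_add_count_mod N]
  push_cast
  rw [key, abs_le]
  constructor <;> linarith [(Nat.count p (N % L)).cast_nonneg (α := ℝ)]

theorem card_filter_Ioc_eq_count (p : ℕ → Prop) [DecidablePred p] (N : ℕ) :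
    #{k ∈ Ioc 0 N | p k} = Nat.count (fun k => p (k + 1)) N := by
  have hIoc : Ioc 0 N = (range N).map (addRightEmbedding 1) := by
    rw [range_eq_Ico, map_add_right_Ico]
    ext k
    simp only [mem_Ioc, mem_Ico]
    omega
  rw [Nat.count_eq_card_filter_range, hIoc, filter_map, card_map]
  rfl

theorem Function.Periodic.tendsto_card_filter_Ioc_div {p : ℕ → Prop} [DecidablePred p] {L : ℕ}
    (hp : Periodic p L) (hL : 0 < L) :
    Tendsto (fun N => (#{k ∈ Ioc 0 N | p k} : ℝ) / N) atTop (𝓝 (#{k ∈ Ioc 0 L | p k} / L)) := by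
  have hshift : Periodic (fun k => p (k + 1)) L := fun k => by
    simpa only [add_right_comm k L 1] using hp (k + 1)
  simpa only [card_filter_Ioc_eq_count] using hshift.tendsto_count_div hL

theorem card_filter_Ioc_sq_dvd_div_le (P : ℕ → Prop) [DecidablePred P] (d N : ℕ) :
    (#{k ∈ Ioc 0 N | d ^ 2 ∣ k ∧ P k} : ℝ) / N ≤ 1 / (d : ℝ) ^ 2 := by
  rcases eq_or_ne N 0 with rfl | hN
  · simp
  calc (#{k ∈ Ioc 0 N | d ^ 2 ∣ k ∧ P k} : ℝ) / N ≤ ((N / d ^ 2 : ℕ) : ℝ) / N := by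
        gcongr
        rw [← Nat.Ioc_filter_dvd_card_eq_div]
        exact card_le_card fun k => by simp only [mem_filter]; exact fun hk => ⟨hk.1, hk.2.1⟩
    _ ≤ (N / (d : ℝ) ^ 2) / N := by
        gcongr
        exact_mod_cast Nat.cast_div_le
    _ = 1 / (d : ℝ) ^ 2 := by field_simp

theorem Function.Periodic.tendsto_card_filter_squarefree_div {P : ℕ → Prop} [DecidablePred P]
    {L : ℕ} (hP : Periodic P L) (hL : 0 < L) :
    Tendsto (fun N => (#{k ∈ Ioc 0 N | Squarefree k ∧ P k} : ℝ) / N) atTop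
      (𝓝 (∑' d, μ d * ((#{k ∈ Ioc 0 (L * d ^ 2) | d ^ 2 ∣ k ∧ P k} : ℝ) / (L * d ^ 2 : ℕ)))) := by
  have hsum (N : ℕ) : (#{k ∈ Ioc 0 N | Squarefree k ∧ P k} : ℝ) / N =
      ∑' d, μ d * ((#{k ∈ Ioc 0 N | d ^ 2 ∣ k ∧ P k} : ℝ) / N) := by
    rw [tsum_eq_sum (s := Ioc 0 N)]
    · simp_rw [← mul_div_assoc, ← sum_div]
      congr 1
      exact_mod_cast card_filter_squarefree_eq_sum_moebius P N
    · intro d hd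
      suffices #{k ∈ Ioc 0 N | d ^ 2 ∣ k ∧ P k} = 0 by simp [this]
      refine card_eq_zero.mpr (filter_eq_empty_iff.mpr fun k hk hdk => hd ?_)
      rw [mem_Ioc] at hk ⊢
      have hd0 : d ≠ 0 := by rintro rfl; simp at hdk; omega
      exact ⟨Nat.pos_of_ne_zero hd0, (Nat.le_self_pow two_ne_zero d).trans
        ((Nat.le_of_dvd hk.1 hdk.1).trans hk.2)⟩
  simp_rw [hsum]
  refine tendsto_tsum_of_dominated_convergence (bound := fun d : ℕ => 1 / (d : ℝ) ^ 2)
    (Real.summable_one_div_nat_pow.mpr one_lt_two) (fun d => ?_)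
    (Eventually.of_forall fun N d => ?_)
  · rcases eq_or_ne d 0 with rfl | hd
    · simp
    have hper : Periodic (fun k => d ^ 2 ∣ k ∧ P k) (L * d ^ 2) := fun k => by
      have h := hP.nat_mul (d ^ 2) k
      simp only [Nat.cast_id] at h
      simp only [mul_comm L, h, Nat.dvd_add_left (dvd_mul_right _ L)]
    exact (hper.tendsto_card_filter_Ioc_div (by positivity)).const_mul _
  · -- at `d = 0` the bound `1 / 0 ^ 2` is `0`, as is the count
    rw [norm_mul, Real.norm_eq_abs, Real.norm_of_nonneg (by positivity)]
    exact (mul_le_of_le_one_left (by positivity) (by exact_mod_cast abs_moebius_le_one)).trans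
      (card_filter_Ioc_sq_dvd_div_le P d N)

theorem card_filter_Ioc_le_of_modEq {q : ℕ → Prop} [DecidablePred q] {L : ℕ}
    (hq : ∀ x y, q x → q y → x ≡ y [MOD L]) (N : ℕ) :
    (#{k ∈ Ioc 0 N | q k} : ℝ) ≤ N / L + 1 := by
  have hcard : #{k ∈ Ioc 0 N | q k} ≤ N / L + 1 := by
    refine (card_le_card_of_injOn (· / L) (fun k hk => ?_) fun x hx y hy hxy => ?_).trans_eq
      (card_range _)
    · simp only [coe_filter, mem_Ioc, Set.mem_ofPred_eq, coe_range, Set.mem_Iio] at hk ⊢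
      exact Nat.lt_succ_of_le (Nat.div_le_div_right hk.1.2)
    · simp only [coe_filter, Set.mem_ofPred_eq] at hx hy
      rw [← Nat.div_add_mod x L, ← Nat.div_add_mod y L, show x / L = y / L from hxy,
        hq x y hx.2 hy.2]
  calc (#{k ∈ Ioc 0 N | q k} : ℝ) ≤ (N / L : ℕ) + 1 := by exact_mod_cast hcard
    _ ≤ N / L + 1 := by gcongr; exact Nat.cast_div_le

theorem le_card_filter_Ioc_modEq {L : ℕ} (hL : 0 < L) (v N : ℕ) :
    (N : ℝ) / L - 1 ≤ #{k ∈ Ioc 0 N | k ≡ v [MOD L]} := by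
  have hcard := Nat.Ioc_filter_modEq_card 0 N hL v
  have hfloor : (N : ℚ) / L - 1 ≤ ⌊((N : ℚ) - v) / L⌋ - ⌊((0 : ℕ) - (v : ℚ)) / L⌋ := by
    have h1 := Int.sub_one_lt_floor (((N : ℚ) - v) / L)
    have h2 := Int.floor_le (((0 : ℕ) - (v : ℚ)) / L)
    have h3 : ((N : ℚ) - v) / L - ((0 : ℕ) - (v : ℚ)) / L = N / L := by ring
    linarith
  have hQ : (N : ℚ) / L - 1 ≤ ((#{k ∈ Ioc 0 N | k ≡ v [MOD L]} : ℤ) : ℚ) := by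
    rw [hcard]
    exact hfloor.trans (by exact_mod_cast le_max_left _ _)
  have hR := (Rat.cast_le (K := ℝ)).mpr hQ
  push_cast at hR
  exact hR

theorem card_filter_Ioc_le_add_sum_prime_sq_dvd (Q : ℕ → Prop) [DecidablePred Q] (N : ℕ) :
    #{k ∈ Ioc 0 N | Q k} ≤ #{k ∈ Ioc 0 N | Squarefree k ∧ Q k} +
      ∑ p ∈ range (N.sqrt + 1) with p.Prime, #{k ∈ Ioc 0 N | p ^ 2 ∣ k ∧ Q k} := by
  refine (card_le_card fun k hk => ?_).trans ((card_union_le _ _).trans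
    (Nat.add_le_add_left card_biUnion_le _))
  simp only [mem_filter, mem_Ioc] at hk
  by_cases hk' : Squarefree k
  · exact mem_union_left _ (mem_filter.mpr ⟨mem_Ioc.mpr hk.1, hk', hk.2⟩)
  obtain ⟨p, hp, hpk⟩ : ∃ p, p.Prime ∧ p * p ∣ k := by
    simpa [Nat.squarefree_iff_prime_squarefree] using hk'
  refine mem_union_right _ (mem_biUnion.mpr ⟨p, ?_, ?_⟩)
  · simp only [mem_filter, mem_range]
    exact ⟨Nat.lt_succ_of_le (Nat.le_sqrt.mpr ((Nat.le_of_dvd hk.1.1 hpk).trans hk.1.2)), hp⟩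
  · simp only [mem_filter, mem_Ioc, sq]
    exact ⟨hk.1, hpk, hk.2⟩

theorem card_filter_Ioc_prime_sq_dvd_modEq_le {a r p : ℕ} (hr : Squarefree r)
    (hp : p.Prime) (N : ℕ) :
    (#{k ∈ Ioc 0 N | p ^ 2 ∣ k ∧ k ≡ r [MOD a ^ 2]} : ℝ) ≤ N / a ^ 2 * (1 / p ^ 2) + 1 := by
  by_cases hpa : p ∣ a
  · have hempty : {k ∈ Ioc 0 N | p ^ 2 ∣ k ∧ k ≡ r [MOD a ^ 2]} = ∅ := by
      refine filter_eq_empty_iff.mpr fun k _ hk => hp.not_isUnit (hr p ?_)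
      rw [← sq, ← Nat.modEq_zero_iff_dvd]
      exact ((hk.2.of_dvd (pow_dvd_pow_of_dvd hpa 2)).symm.trans
        (Nat.modEq_zero_iff_dvd.mpr hk.1))
    rw [hempty, card_empty, Nat.cast_zero]
    positivity
  have hcop : (p ^ 2).Coprime (a ^ 2) :=
    Nat.Coprime.pow 2 2 ((Nat.Prime.coprime_iff_not_dvd hp).mpr hpa)
  refine (card_filter_Ioc_le_of_modEq (L := p ^ 2 * a ^ 2)
    (fun x y hx hy => (Nat.modEq_and_modEq_iff_modEq_mul hcop).mp
      ⟨(Nat.modEq_zero_iff_dvd.mpr hx.1).trans (Nat.modEq_zero_iff_dvd.mpr hy.1).symm,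
        hx.2.trans hy.2.symm⟩) N).trans_eq ?_
  push_cast
  ring

theorem sum_prime_one_div_sq_le (s : Finset ℕ) :
    ∑ p ∈ s with p.Prime, 1 / (p : ℝ) ^ 2 ≤ π ^ 2 / 6 - 1 := by
  have h := sum_le_hasSum (insert 1 {p ∈ s | p.Prime}) (fun _ _ => by positivity) hasSum_zeta_two
  rw [sum_insert (by simp [Nat.not_prime_one])] at h
  simp only [Nat.cast_one, one_pow, div_one] at h
  linarith

theorem le_card_filter_Ioc_squarefree_modEq {a r : ℕ} (ha : 0 < a) (hr : Squarefree r) (N : ℕ) :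
    (N : ℝ) / a ^ 2 * (2 - π ^ 2 / 6) - (√N + 2) ≤
      #{k ∈ Ioc 0 N | Squarefree k ∧ k ≡ r [MOD a ^ 2]} := by
  set S := {p ∈ range (N.sqrt + 1) | p.Prime}
  have hsplit : (#{k ∈ Ioc 0 N | k ≡ r [MOD a ^ 2]} : ℝ) ≤
      #{k ∈ Ioc 0 N | Squarefree k ∧ k ≡ r [MOD a ^ 2]} +
        ∑ p ∈ S, (#{k ∈ Ioc 0 N | p ^ 2 ∣ k ∧ k ≡ r [MOD a ^ 2]} : ℝ) := by
    exact_mod_cast card_filter_Ioc_le_add_sum_prime_sq_dvd (· ≡ r [MOD a ^ 2]) N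
  have hS : (#S : ℝ) ≤ √N + 1 := by
    have hcard : #S ≤ N.sqrt + 1 := (card_filter_le _ _).trans (card_range _).le
    calc (#S : ℝ) ≤ N.sqrt + 1 := by exact_mod_cast hcard
      _ ≤ √N + 1 := by gcongr; exact Real.nat_sqrt_le_real_sqrt
  have hsum : ∑ p ∈ S, (#{k ∈ Ioc 0 N | p ^ 2 ∣ k ∧ k ≡ r [MOD a ^ 2]} : ℝ) ≤
      N / a ^ 2 * (π ^ 2 / 6 - 1) + (√N + 1) :=
    calc _ ≤ ∑ p ∈ S, ((N : ℝ) / a ^ 2 * (1 / p ^ 2) + 1) := sum_le_sum fun p hp =>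
          card_filter_Ioc_prime_sq_dvd_modEq_le hr (mem_filter.mp hp).2 N
      _ = N / a ^ 2 * ∑ p ∈ S, 1 / (p : ℝ) ^ 2 + #S := by
          rw [sum_add_distrib, mul_sum, sum_const, nsmul_one]
      _ ≤ N / a ^ 2 * (π ^ 2 / 6 - 1) + (√N + 1) := by
          gcongr
          exact sum_prime_one_div_sq_le _
  have hA := le_card_filter_Ioc_modEq (L := a ^ 2) (by positivity) r N
  push_cast at hA
  linarith

theorem exists_squarefree_modEq {a b : ℕ} (ha : 0 < a) (hgcd : Squarefree (a.gcd b)) :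
    ∃ r, Squarefree r ∧ r ≡ b [MOD a] := by
  obtain ⟨a', b', hcop, hadef, hbdef⟩ := Nat.exists_coprime a b
  have ha' : a' ≠ 0 := by rintro rfl; simp at hadef; omega
  obtain ⟨P, hPa, hP, hPb⟩ := Nat.forall_exists_prime_gt_and_modEq a ha' hcop.symm
  have hPg : P.Coprime (a.gcd b) := (Nat.Prime.coprime_iff_not_dvd hP).mpr fun h => by
    have := (Nat.le_of_dvd (Nat.gcd_pos_of_pos_left b ha) h).trans (Nat.gcd_le_left b ha)
    omega
  refine ⟨P * a.gcd b, Nat.squarefree_mul_iff.mpr ⟨hPg, hP.squarefree, hgcd⟩, ?_⟩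
  have h := hPb.mul_right' (a.gcd b)
  rwa [← hadef, ← hbdef] at h

theorem tendsto_sqrt_add_const_div_atTop (C : ℝ) :
    Tendsto (fun N : ℕ => (√N + C) / N) atTop (𝓝 0) := by
  have hsqrt : Tendsto (fun N : ℕ => √N / N) atTop (𝓝 0) := by
    simp_rw [Real.sqrt_div_self']
    exact tendsto_const_nhds.div_atTop (tendsto_sqrt_atTop.comp tendsto_natCast_atTop_atTop)
  simpa [add_div] using hsqrt.add (tendsto_const_div_atTop_nhds_zero_nat C)

theorem exists_pos_tendsto_card_filter_squarefree_modEq_div {a b : ℕ} (ha : 0 < a)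
    (hgcd : Squarefree (a.gcd b)) :
    ∃ δ > 0, Tendsto (fun N => (#{k ∈ Ioc 0 N | Squarefree k ∧ k ≡ b [MOD a]} : ℝ) / N) atTop
      (𝓝 δ) := by
  have hper : Periodic (· ≡ b [MOD a]) a := fun k => by simp [Nat.ModEq]
  refine ⟨_, ?_, hper.tendsto_card_filter_squarefree_div ha⟩
  obtain ⟨r, hr, hrb⟩ := exists_squarefree_modEq ha hgcd
  set c : ℝ := (2 - π ^ 2 / 6) / a ^ 2
  have hc : 0 < c := div_pos (by nlinarith [pi_lt_d2, pi_pos]) (by positivity)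
  have hlower (N : ℕ) (hN : N ≠ 0) : c - (√N + 2) / N ≤
      (#{k ∈ Ioc 0 N | Squarefree k ∧ k ≡ b [MOD a]} : ℝ) / N := by
    have hsub : #{k ∈ Ioc 0 N | Squarefree k ∧ k ≡ r [MOD a ^ 2]} ≤
        #{k ∈ Ioc 0 N | Squarefree k ∧ k ≡ b [MOD a]} :=
      card_le_card fun k => by
        simp only [mem_filter]
        exact fun hk => ⟨hk.1, hk.2.1, (hk.2.2.of_dvd (Dvd.intro_left _ (sq a).symm)).trans hrb⟩
    have hsub' : (#{k ∈ Ioc 0 N | Squarefree k ∧ k ≡ r [MOD a ^ 2]} : ℝ) ≤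
        #{k ∈ Ioc 0 N | Squarefree k ∧ k ≡ b [MOD a]} := by exact_mod_cast hsub
    have hcN : c * N = N / a ^ 2 * (2 - π ^ 2 / 6) := by unfold c; ring
    rw [le_div_iff₀ (by positivity), sub_mul, div_mul_cancel₀ _ (by positivity)]
    linarith [le_card_filter_Ioc_squarefree_modEq ha hr N]
  refine hc.trans_le (le_of_tendsto_of_tendsto ?_ (hper.tendsto_card_filter_squarefree_div ha)
    ((eventually_ne_atTop 0).mono hlower))
  simpa using (tendsto_sqrt_add_const_div_atTop 2).const_sub c

theorem infinite_setOf_of_tendsto_card_filter_range_div {p : ℕ → Prop} [DecidablePred p] {δ : ℝ}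
    (hδ : 0 < δ) (h : Tendsto (fun N => (#{k ∈ range (N + 1) | p k} : ℝ) / N) atTop (𝓝 δ)) :
    {k | p k}.Infinite := by
  intro hfin
  refine hδ.not_ge (le_of_tendsto_of_tendsto' h
    (tendsto_const_div_atTop_nhds_zero_nat (#hfin.toFinset : ℝ)) fun N => ?_)
  gcongr
  exact fun k hk => hfin.mem_toFinset.mpr (mem_filter.mp hk).2

theorem filter_range_succ_squarefree_eq (P : ℕ → Prop) [DecidablePred P] (N : ℕ) :
    {k ∈ range (N + 1) | Squarefree k ∧ P k} = {k ∈ Ioc 0 N | Squarefree k ∧ P k} := by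
  ext k
  simp only [mem_filter, mem_range, mem_Ioc]
  exact ⟨fun h => ⟨⟨Nat.pos_of_ne_zero h.2.1.ne_zero, by omega⟩, h.2⟩, fun h => ⟨by omega, h.2⟩⟩

theorem stmt_16_general (a b : ℕ) (ha : 0 < a) (hgcd : Squarefree (Nat.gcd a b)) :
    (∃ d : ℝ, 0 < d ∧
      Tendsto (fun n : ℕ =>
        ((Finset.range (n + 1)).filter (fun k => Squarefree k ∧ k % a = b % a)).card / (n : ℝ))
        atTop (nhds d)) ∧
    {k : ℕ | Squarefree k ∧ k % a = b % a}.Infinite := by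
  obtain ⟨δ, hδ, hlim⟩ := exists_pos_tendsto_card_filter_squarefree_modEq_div ha hgcd
  have hlim' : Tendsto (fun n : ℕ =>
      ((Finset.range (n + 1)).filter (fun k => Squarefree k ∧ k % a = b % a)).card / (n : ℝ))
      atTop (nhds δ) := by
    simp only [filter_range_succ_squarefree_eq]
    exact hlim
  exact ⟨⟨δ, hδ, hlim'⟩, infinite_setOf_of_tendsto_card_filter_range_div hδ hlim'⟩

/-- If gcd(a,b) is square-free, the set of square-free natural numbers
congruent to b modulo a has positive asymptotic density; in particular it is infinite. -/
theorem stmt_16 (a b : ℕ) (ha : 0 < a) (hb : 0 < b) (hgcd : Squarefree (Nat.gcd a b)) :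
    (∃ d : ℝ, 0 < d ∧
      Tendsto (fun n : ℕ =>
        ((Finset.range (n + 1)).filter (fun k => Squarefree k ∧ k % a = b % a)).card / (n : ℝ))
        atTop (nhds d)) ∧
    {k : ℕ | Squarefree k ∧ k % a = b % a}.Infinite :=
  stmt_16_general a b ha hgcd
end
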